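/- Let Ω ⊂ ℝ² be either an open ball {x : |x| < R} (R > 0) or an open annulus {x : a < |x| < b} (0 < a < b) centered at the origin, let α > 0, set κ = 2/(α+2) and Ω_κ = T_κ^{-1}(Ω), and let f : ℝ → ℝ be continuously differentiable. Let v, ψ : ℝ² → ℝ be continuously differentiable on the closure of Ω_κ, and set u = v ∘ T_κ^{-1} and φ = ψ ∘ T_κ^{-1}. Assume that the integrals ∫_{Ω_κ} |∇ψ|² dy, ∫_{Ω_κ} |f'(v)| ψ² dy, ∫_Ω |∇φ|² dx and ∫_Ω |x|^α |f'(u)| φ² dx are all finite. Then ∫_{Ω_κ} ( |∇ψ(y)|² − κ² f'(v(y)) ψ(y)² ) dy ≥ κ ∫_Ω ( |∇φ(x)|² − |x|^α f'(u(x)) φ(x)² ) dx. -/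

import Mathlib

/-!
Substituting `x = T_κ y` turns integrals over `Ω` into integrals over `Ω_κ` with Jacobian
`κ |y|^(2κ-2)`. Because `κ α + 2κ - 2 = 0`, this Jacobian cancels the weight `|T_κ y|^α = |y|^(κα)`
exactly, so the potential terms agree: `κ ∫_Ω |x|^α f'(u) φ² = κ² ∫_{Ω_κ} f'(v) ψ²`.
For the Dirichlet terms, `DT_κ(y) = |y|^(κ-1) (id + (κ-1) P_y)` with `P_y` the orthogonal projection
onto `ℝ y`; it is symmetric with singular values `|y|^(κ-1)` and `κ |y|^(κ-1)`, so for `κ ≤ 1`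
the chain rule `∇ψ(y) = DT_κ(y) ∇φ(T_κ y)` gives `|∇ψ(y)|² ≥ κ · κ|y|^(2κ-2) |∇φ(T_κ y)|²`.
The origin, where `T_κ` is not differentiable, is a null set.
-/

open MeasureTheory

noncomputable abbrev E2 : Type := EuclideanSpace ℝ (Fin 2)

/-- The transformation T_κ y = |y|^{κ-1} y (with T_κ 0 = 0). -/
noncomputable def Tk (κ : ℝ) (y : E2) : E2 := ‖y‖ ^ (κ - 1) • y

section StretchAlong

variable {E : Type*} [NormedAddCommGroup E] [InnerProductSpace ℝ E]

-- Scales the component along `y` by `κ` and fixes `y`'s orthogonal complement; for `y = 0`,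
-- division by zero makes it the identity.
noncomputable def stretchAlong (y : E) (κ : ℝ) : E →L[ℝ] E :=
  ContinuousLinearMap.id ℝ E + ((κ - 1) / ‖y‖ ^ 2) • (innerSL ℝ y).smulRight y

theorem stretchAlong_apply (y : E) (κ : ℝ) (g : E) :
    stretchAlong y κ g = g + ((κ - 1) / ‖y‖ ^ 2 * inner ℝ y g) • y := by
  simp [stretchAlong, mul_smul]

theorem isSymmetric_stretchAlong (y : E) (κ : ℝ) :
    (stretchAlong y κ : E →ₗ[ℝ] E).IsSymmetric := by
  intro g h
  simp only [ContinuousLinearMap.coe_coe, stretchAlong_apply, inner_add_left, inner_add_right,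
    real_inner_smul_left, real_inner_smul_right, real_inner_comm y g]
  ring

theorem sq_mul_norm_sq_le_norm_stretchAlong_apply_sq {κ : ℝ} (hκ : κ ^ 2 ≤ 1) (y g : E) :
    κ ^ 2 * ‖g‖ ^ 2 ≤ ‖stretchAlong y κ g‖ ^ 2 := by
  rcases eq_or_ne y 0 with rfl | hy
  · rw [stretchAlong_apply, inner_zero_left, mul_zero, zero_smul, add_zero]
    exact mul_le_of_le_one_left (sq_nonneg _) hκ
  have hn : 0 < ‖y‖ := norm_pos_iff.2 hy
  have hcs : (inner ℝ y g / ‖y‖) ^ 2 ≤ ‖g‖ ^ 2 := by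
    rw [div_pow, div_le_iff₀ (by positivity), ← mul_pow, mul_comm]
    exact sq_le_sq' (neg_le_of_abs_le (abs_real_inner_le_norm y g)) (real_inner_le_norm y g)
  have hexp : ‖stretchAlong y κ g‖ ^ 2 = ‖g‖ ^ 2 + (κ ^ 2 - 1) * (inner ℝ y g / ‖y‖) ^ 2 := by
    rw [stretchAlong_apply, norm_add_sq_real, norm_smul, real_inner_smul_right, real_inner_comm,
      Real.norm_eq_abs, mul_pow, sq_abs]
    field_simp
    ring
  nlinarith

end StretchAlong

theorem det_stretchAlong {y : E2} (hy : y ≠ 0) (κ : ℝ) : (stretchAlong y κ).det = κ := by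
  have hnorm : ‖y‖ ^ 2 = y 0 ^ 2 + y 1 ^ 2 := by
    rw [EuclideanSpace.norm_eq, Real.sq_sqrt (by positivity)]
    simp [Fin.sum_univ_two, sq]
  rw [ContinuousLinearMap.det,
    ← LinearMap.det_toMatrix (EuclideanSpace.basisFun (Fin 2) ℝ).toBasis, Matrix.det_fin_two]
  simp only [LinearMap.toMatrix_apply, OrthonormalBasis.coe_toBasis, EuclideanSpace.basisFun_apply,
    ContinuousLinearMap.coe_coe, stretchAlong_apply, EuclideanSpace.inner_single_right,
    Real.ringHom_apply, one_mul, map_add, map_smul, Finsupp.coe_add, Finsupp.coe_smul,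
    Pi.add_apply, OrthonormalBasis.coe_toBasis_repr_apply, EuclideanSpace.basisFun_repr,
    PiLp.single_eq_same, Pi.smul_apply, smul_eq_mul, ne_eq, zero_ne_one, one_ne_zero,
    not_false_eq_true, PiLp.single_eq_of_ne, zero_add]
  field_simp
  linear_combination (1 - κ) * ‖y‖ ^ 2 * hnorm

section Gradient

variable {E : Type*} [NormedAddCommGroup E] [InnerProductSpace ℝ E] [CompleteSpace E]

theorem gradient_comp_of_isSymmetric {φ : E → ℝ} {T : E → E} {L : E →L[ℝ] E} {y : E}
    (hφ : DifferentiableAt ℝ φ (T y)) (hT : HasFDerivAt T L y)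
    (hL : (L : E →ₗ[ℝ] E).IsSymmetric) :
    gradient (φ ∘ T) y = L (gradient φ (T y)) := by
  refine ext_inner_right ℝ fun h => ?_
  rw [inner_gradient_left, (hφ.hasFDerivAt.comp y hT).fderiv, ContinuousLinearMap.comp_apply,
    ← inner_gradient_left]
  exact (hL _ _).symm

@[fun_prop]
theorem measurable_gradient [MeasurableSpace E] [BorelSpace E] (φ : E → ℝ) :
    Measurable (gradient φ) :=
  (InnerProductSpace.toDual ℝ E).symm.continuous.measurable.comp (measurable_fderiv ℝ φ)

end Gradient

theorem ae_restrict_mem_and_ne {X : Type*} [MeasurableSpace X] {μ : Measure X}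
    [NullSingletonClass μ] {s : Set X} (hs : MeasurableSet s) (x : X) :
    ∀ᵐ y ∂μ.restrict s, y ∈ s ∧ y ≠ x :=
  (ae_restrict_mem hs).and (ae_restrict_of_ae (compl_mem_ae_iff.2 (measure_singleton x)))

theorem integrableOn_const_mul_comp_mul_sq {X : Type*} [TopologicalSpace X] [MeasurableSpace X]
    [OpensMeasurableSpace X] {μ : Measure X} {s : Set X} (hs : MeasurableSet s) {g : ℝ → ℝ}
    (hg : Measurable g) {v ψ : X → ℝ} (hv : ContinuousOn v s) (hψ : ContinuousOn ψ s)
    (hint : IntegrableOn (fun y => |g (v y)| * ψ y ^ 2) s μ) (c : ℝ) :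
    IntegrableOn (fun y => c * g (v y) * ψ y ^ 2) s μ := by
  have hvm := hv.aemeasurable (μ := μ) hs
  have hψm := hψ.aemeasurable (μ := μ) hs
  refine (hint.const_mul |c|).mono' (AEMeasurable.aestronglyMeasurable (by fun_prop))
    (Filter.Eventually.of_forall fun y => ?_)
  rw [Real.norm_eq_abs, abs_mul, abs_mul, abs_of_nonneg (sq_nonneg (ψ y)), mul_assoc]

theorem sq_rpow_sub_one {x : ℝ} (hx : 0 ≤ x) (κ : ℝ) : (x ^ (κ - 1)) ^ 2 = x ^ (2 * κ - 2) := by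
  rw [← Real.rpow_natCast, ← Real.rpow_mul hx]
  ring_nf

@[simp]
theorem Tk_zero (κ : ℝ) : Tk κ 0 = 0 := by simp [Tk]

theorem norm_Tk_of_ne_zero (κ : ℝ) {y : E2} (hy : y ≠ 0) : ‖Tk κ y‖ = ‖y‖ ^ κ := by
  have hn : 0 < ‖y‖ := norm_pos_iff.2 hy
  rw [Tk, norm_smul, Real.norm_of_nonneg (by positivity), ← Real.rpow_add_one hn.ne']
  ring_nf

theorem Tk_ne_zero (κ : ℝ) {y : E2} (hy : y ≠ 0) : Tk κ y ≠ 0 := by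
  rw [← norm_ne_zero_iff, norm_Tk_of_ne_zero κ hy]
  exact (Real.rpow_pos_of_pos (norm_pos_iff.2 hy) κ).ne'

theorem norm_Tk {κ : ℝ} (hκ : κ ≠ 0) (y : E2) : ‖Tk κ y‖ = ‖y‖ ^ κ := by
  rcases eq_or_ne y 0 with rfl | hy
  · simp [Real.zero_rpow hκ]
  · exact norm_Tk_of_ne_zero κ hy

theorem Tk_Tk (a b : ℝ) (y : E2) : Tk a (Tk b y) = Tk (a * b) y := by
  rcases eq_or_ne y 0 with rfl | hy
  · simp
  have hn : 0 < ‖y‖ := norm_pos_iff.2 hy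
  rw [Tk, norm_Tk_of_ne_zero b hy, Tk, Tk, smul_smul, ← Real.rpow_mul hn.le, ← Real.rpow_add hn]
  ring_nf

theorem Tk_one : Tk 1 = id := by
  ext1 y
  simp [Tk]

theorem leftInverse_Tk {κ : ℝ} (hκ : κ ≠ 0) : Function.LeftInverse (Tk (1 / κ)) (Tk κ) := by
  intro y
  rw [Tk_Tk, one_div_mul_cancel hκ, Tk_one, id]

theorem rightInverse_Tk {κ : ℝ} (hκ : κ ≠ 0) : Function.RightInverse (Tk (1 / κ)) (Tk κ) := by
  intro y
  rw [Tk_Tk, mul_one_div_cancel hκ, Tk_one, id]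

@[fun_prop]
theorem measurable_Tk (κ : ℝ) : Measurable (Tk κ) :=
  (measurable_norm.pow_const _).smul measurable_id

theorem continuous_Tk {κ : ℝ} (hκ : 0 < κ) : Continuous (Tk κ) := by
  rw [continuous_iff_continuousAt]
  intro y
  rcases eq_or_ne y 0 with rfl | hy
  · rw [ContinuousAt, Tk_zero, tendsto_zero_iff_norm_tendsto_zero]
    simp_rw [norm_Tk hκ.ne']
    simpa [Real.zero_rpow hκ.ne'] using
      ((continuous_norm (E := E2)).rpow_const fun _ => Or.inr hκ.le).tendsto 0
  · exact ((continuous_norm.continuousAt.rpow_const (Or.inl (norm_ne_zero_iff.2 hy))).smul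
      continuousAt_id)

theorem hasFDerivAt_Tk (κ : ℝ) {y : E2} (hy : y ≠ 0) :
    HasFDerivAt (Tk κ) (‖y‖ ^ (κ - 1) • stretchAlong y κ) y := by
  have hpow : ∀ z : E2, (‖z‖ ^ 2) ^ ((κ - 1) / 2) = ‖z‖ ^ (κ - 1) := fun z => by
    rw [← Real.rpow_natCast, ← Real.rpow_mul (norm_nonneg z)]
    ring_nf
  have hscalar : HasFDerivAt (fun z : E2 => ‖z‖ ^ (κ - 1))
      (((κ - 1) / 2 * (‖y‖ ^ 2) ^ ((κ - 1) / 2 - 1)) • (2 : ℕ) • innerSL ℝ y) y := by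
    simpa only [hpow] using (hasStrictFDerivAt_norm_sq y).hasFDerivAt.rpow_const
      (p := (κ - 1) / 2) (Or.inl (by positivity))
  refine (hscalar.smul (hasFDerivAt_id y)).congr_fderiv ?_
  have hexp : (‖y‖ ^ 2) ^ ((κ - 1) / 2 - 1) = ‖y‖ ^ (κ - 1) / ‖y‖ ^ 2 := by
    rw [Real.rpow_sub_one (by positivity), hpow]
  ext1 g
  simp only [add_apply, smul_apply, stretchAlong_apply,
    ContinuousLinearMap.smulRight_apply, ContinuousLinearMap.id_apply, innerSL_apply_apply, hexp,
    id]
  module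

theorem abs_det_fderiv_Tk {κ : ℝ} {y : E2} (hy : y ≠ 0) :
    |(‖y‖ ^ (κ - 1) • stretchAlong y κ).det| = |κ| * ‖y‖ ^ (2 * κ - 2) := by
  rw [ContinuousLinearMap.det, ContinuousLinearMap.toLinearMap_smul, LinearMap.det_smul,
    ← ContinuousLinearMap.det, det_stretchAlong hy, finrank_euclideanSpace_fin, abs_mul,
    abs_of_pos (by positivity), sq_rpow_sub_one (norm_nonneg y), mul_comm]

theorem integral_preimage_Tk {κ : ℝ} (hκ : κ ≠ 0) {Ω : Set E2} (hΩ : MeasurableSet Ω)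
    (g : E2 → ℝ) :
    ∫ x in Ω, g x = ∫ y in Tk κ ⁻¹' Ω, |κ| * ‖y‖ ^ (2 * κ - 2) * g (Tk κ y) := by
  have hinj := (leftInverse_Tk hκ).injective
  have hs : MeasurableSet (Tk κ ⁻¹' Ω \ {0}) :=
    (measurable_Tk κ hΩ).diff (measurableSet_singleton 0)
  have himage : Tk κ '' (Tk κ ⁻¹' Ω \ {0}) = Ω \ {0} := by
    rw [Set.image_sdiff hinj, Set.image_preimage_eq Ω (rightInverse_Tk hκ).surjective,
      Set.image_singleton, Tk_zero]
  have hderiv : ∀ y ∈ Tk κ ⁻¹' Ω \ {0},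
      HasFDerivWithinAt (Tk κ) (‖y‖ ^ (κ - 1) • stretchAlong y κ) (Tk κ ⁻¹' Ω \ {0}) y :=
    fun y hy => (hasFDerivAt_Tk κ hy.2).hasFDerivWithinAt
  calc ∫ x in Ω, g x = ∫ x in Tk κ '' (Tk κ ⁻¹' Ω \ {0}), g x := by
        rw [himage]
        exact setIntegral_congr_set (sdiff_null_ae_eq_self (measure_singleton 0)).symm
    _ = ∫ y in Tk κ ⁻¹' Ω \ {0}, |κ| * ‖y‖ ^ (2 * κ - 2) * g (Tk κ y) := by
        rw [integral_image_eq_integral_abs_det_fderiv_smul volume hs hderiv hinj.injOn]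
        refine setIntegral_congr_fun hs fun y hy => ?_
        rw [abs_det_fderiv_Tk hy.2, smul_eq_mul]
    _ = ∫ y in Tk κ ⁻¹' Ω, |κ| * ‖y‖ ^ (2 * κ - 2) * g (Tk κ y) :=
        setIntegral_congr_set (sdiff_null_ae_eq_self (measure_singleton 0))

theorem rpow_mul_norm_Tk_rpow {κ α : ℝ} (h : κ * (α + 2) = 2) {y : E2} (hy : y ≠ 0) :
    ‖y‖ ^ (2 * κ - 2) * ‖Tk κ y‖ ^ α = 1 := by
  have hn : 0 < ‖y‖ := norm_pos_iff.2 hy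
  rw [norm_Tk_of_ne_zero κ hy, ← Real.rpow_mul hn.le, ← Real.rpow_add hn,
    show 2 * κ - 2 + κ * α = 0 by linarith, Real.rpow_zero]

theorem const_mul_integral_eq_integral_preimage_Tk {κ α : ℝ} (hκ : 0 < κ)
    (hκα : κ * (α + 2) = 2) {Ω : Set E2} (hΩ : MeasurableSet Ω) (g : E2 → ℝ) (F : ℝ → ℝ)
    (v ψ : E2 → ℝ) :
    κ * ∫ x in Ω, (g x - ‖x‖ ^ α * F ((v ∘ Tk (1 / κ)) x) * (ψ ∘ Tk (1 / κ)) x ^ 2)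
      = ∫ y in Tk κ ⁻¹' Ω,
          (κ ^ 2 * ‖y‖ ^ (2 * κ - 2) * g (Tk κ y) - κ ^ 2 * F (v y) * ψ y ^ 2) := by
  rw [integral_preimage_Tk hκ.ne' hΩ, ← integral_const_mul]
  refine integral_congr_ae ?_
  filter_upwards [ae_restrict_mem_and_ne (measurable_Tk κ hΩ) 0] with y ⟨_, hy0⟩
  simp only [abs_of_pos hκ, Function.comp_apply, leftInverse_Tk hκ.ne' y]
  linear_combination (-κ ^ 2 * F (v y) * ψ y ^ 2) * rpow_mul_norm_Tk_rpow hκα hy0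

theorem sq_mul_rpow_mul_norm_gradient_sq_le {κ : ℝ} (hκ : κ ^ 2 ≤ 1) {φ : E2 → ℝ} {y : E2}
    (hy : y ≠ 0) (hφ : DifferentiableAt ℝ φ (Tk κ y)) :
    κ ^ 2 * ‖y‖ ^ (2 * κ - 2) * ‖gradient φ (Tk κ y)‖ ^ 2 ≤ ‖gradient (φ ∘ Tk κ) y‖ ^ 2 := by
  have hL : ((‖y‖ ^ (κ - 1) • stretchAlong y κ : E2 →L[ℝ] E2) : E2 →ₗ[ℝ] E2).IsSymmetric := by
    rw [ContinuousLinearMap.toLinearMap_smul]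
    exact (isSymmetric_stretchAlong y κ).smul (by simp)
  rw [gradient_comp_of_isSymmetric hφ (hasFDerivAt_Tk κ hy) hL, smul_apply, norm_smul, mul_pow,
    Real.norm_of_nonneg (by positivity), sq_rpow_sub_one (norm_nonneg y), mul_comm (κ ^ 2),
    mul_assoc]
  exact mul_le_mul_of_nonneg_left (sq_mul_norm_sq_le_norm_stretchAlong_apply_sq hκ y _)
    (by positivity)

theorem sq_mul_rpow_mul_norm_gradient_comp_Tk_sq_le {κ : ℝ} (hκ : κ ≠ 0) (hκ1 : κ ^ 2 ≤ 1)
    {ψ : E2 → ℝ} {y : E2} (hy : y ≠ 0) (hψ : DifferentiableAt ℝ ψ y) :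
    κ ^ 2 * ‖y‖ ^ (2 * κ - 2) * ‖gradient (ψ ∘ Tk (1 / κ)) (Tk κ y)‖ ^ 2
      ≤ ‖gradient ψ y‖ ^ 2 := by
  have hψ' : DifferentiableAt ℝ ψ (Tk (1 / κ) (Tk κ y)) := by rwa [leftInverse_Tk hκ y]
  have hφ := hψ'.comp _ (hasFDerivAt_Tk (1 / κ) (Tk_ne_zero κ hy)).differentiableAt
  simpa only [Function.comp_assoc, (leftInverse_Tk hκ).comp_eq_id, Function.comp_id] using
    sq_mul_rpow_mul_norm_gradient_sq_le hκ1 hy hφ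

theorem integrableOn_sq_mul_rpow_mul_norm_gradient_comp_Tk_sq {κ : ℝ} (hκ : κ ≠ 0)
    (hκ1 : κ ^ 2 ≤ 1) {s : Set E2} (hs : MeasurableSet s) {ψ : E2 → ℝ}
    (hψ : ∀ y ∈ s, DifferentiableAt ℝ ψ y) (hint : IntegrableOn (fun y => ‖gradient ψ y‖ ^ 2) s) :
    IntegrableOn
      (fun y => κ ^ 2 * ‖y‖ ^ (2 * κ - 2) * ‖gradient (ψ ∘ Tk (1 / κ)) (Tk κ y)‖ ^ 2) s := by
  refine hint.mono' (Measurable.aestronglyMeasurable (by fun_prop)) ?_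
  filter_upwards [ae_restrict_mem_and_ne hs 0] with y ⟨hys, hy0⟩
  rw [Real.norm_of_nonneg (by positivity)]
  exact sq_mul_rpow_mul_norm_gradient_comp_Tk_sq_le hκ hκ1 hy0 (hψ y hys)

theorem quadratic_form_comparison_general
    (Ω : Set E2)
    (hΩ : (∃ R > 0, Ω = Metric.ball 0 R) ∨
      (∃ a b : ℝ, 0 < a ∧ a < b ∧ Ω = {x : E2 | a < ‖x‖ ∧ ‖x‖ < b}))
    (α : ℝ) (hα : 0 < α) (κ : ℝ) (hκ : κ = 2 / (α + 2))
    (f : ℝ → ℝ)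
    (v ψ : E2 → ℝ)
    (hv : ContDiffOn ℝ 1 v (closure (Tk κ ⁻¹' Ω)))
    (hψ : ContDiffOn ℝ 1 ψ (closure (Tk κ ⁻¹' Ω)))
    (u φ : E2 → ℝ)
    (hu : u = v ∘ Tk (1 / κ)) (hφ : φ = ψ ∘ Tk (1 / κ))
    (hint₁ : IntegrableOn (fun y => ‖gradient ψ y‖ ^ 2) (Tk κ ⁻¹' Ω))
    (hint₂ : IntegrableOn (fun y => |deriv f (v y)| * ψ y ^ 2) (Tk κ ⁻¹' Ω)) :
    (∫ y in Tk κ ⁻¹' Ω, (‖gradient ψ y‖ ^ 2 - κ ^ 2 * deriv f (v y) * ψ y ^ 2)) ≥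
      κ * ∫ x in Ω, (‖gradient φ x‖ ^ 2 - ‖x‖ ^ α * deriv f (u x) * φ x ^ 2) := by
  subst hu hφ
  have hκα : κ * (α + 2) = 2 := by rw [hκ]; field_simp
  have hκ0 : 0 < κ := by rw [hκ]; positivity
  have hκ1 : κ ^ 2 ≤ 1 := by nlinarith
  have hΩo : IsOpen Ω := by
    rcases hΩ with ⟨R, -, rfl⟩ | ⟨a, b, -, -, rfl⟩
    · exact Metric.isOpen_ball
    · exact (isOpen_lt continuous_const continuous_norm).inter
        (isOpen_lt continuous_norm continuous_const)
  set s := Tk κ ⁻¹' Ω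
  have hs : IsOpen s := hΩo.preimage (continuous_Tk hκ0)
  have hψd : ∀ y ∈ s, DifferentiableAt ℝ ψ y := fun y hy =>
    (hψ.differentiableOn one_ne_zero).differentiableAt
      (Filter.mem_of_superset (hs.mem_nhds hy) subset_closure)
  have hpot := integrableOn_const_mul_comp_mul_sq hs.measurableSet (measurable_deriv f)
    (hv.continuousOn.mono subset_closure) (hψ.continuousOn.mono subset_closure) hint₂ (κ ^ 2)
  have hgrad := integrableOn_sq_mul_rpow_mul_norm_gradient_comp_Tk_sq hκ0.ne' hκ1
    hs.measurableSet hψd hint₁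
  rw [ge_iff_le, const_mul_integral_eq_integral_preimage_Tk hκ0 hκα hΩo.measurableSet
    (fun x => ‖gradient (ψ ∘ Tk (1 / κ)) x‖ ^ 2)]
  refine integral_mono_ae (hgrad.sub hpot) (hint₁.sub hpot) ?_
  filter_upwards [ae_restrict_mem_and_ne hs.measurableSet 0] with y ⟨hys, hy0⟩
  exact sub_le_sub_right
    (sq_mul_rpow_mul_norm_gradient_comp_Tk_sq_le hκ0.ne' hκ1 hy0 (hψd y hys)) _

theorem quadratic_form_comparison
    (Ω : Set E2)
    (hΩ : (∃ R > 0, Ω = Metric.ball 0 R) ∨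
      (∃ a b : ℝ, 0 < a ∧ a < b ∧ Ω = {x : E2 | a < ‖x‖ ∧ ‖x‖ < b}))
    (α : ℝ) (hα : 0 < α) (κ : ℝ) (hκ : κ = 2 / (α + 2))
    (f : ℝ → ℝ) (hf : ContDiff ℝ 1 f)
    (v ψ : E2 → ℝ)
    (hv : ContDiffOn ℝ 1 v (closure (Tk κ ⁻¹' Ω)))
    (hψ : ContDiffOn ℝ 1 ψ (closure (Tk κ ⁻¹' Ω)))
    (u φ : E2 → ℝ)
    (hu : u = v ∘ Tk (1 / κ)) (hφ : φ = ψ ∘ Tk (1 / κ))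
    (hint₁ : IntegrableOn (fun y => ‖gradient ψ y‖ ^ 2) (Tk κ ⁻¹' Ω))
    (hint₂ : IntegrableOn (fun y => |deriv f (v y)| * ψ y ^ 2) (Tk κ ⁻¹' Ω))
    (hint₃ : IntegrableOn (fun x => ‖gradient φ x‖ ^ 2) Ω)
    (hint₄ : IntegrableOn (fun x => ‖x‖ ^ α * |deriv f (u x)| * φ x ^ 2) Ω) :
    (∫ y in Tk κ ⁻¹' Ω, (‖gradient ψ y‖ ^ 2 - κ ^ 2 * deriv f (v y) * ψ y ^ 2)) ≥
      κ * ∫ x in Ω, (‖gradient φ x‖ ^ 2 - ‖x‖ ^ α * deriv f (u x) * φ x ^ 2) :=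
  quadratic_form_comparison_general Ω hΩ α hα κ hκ f v ψ hv hψ u φ hu hφ hint₁ hint₂
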